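/- Let G be a broken wheel with principal path P = p₀ q p₁ and let L be a list-assignment for G with |L(v)| ≥ 3 for every v ∈ V(G) \ {p₀, q, p₁}, with L(p₀), L(p₁) nonempty and |L(p₀)| + |L(p₁)| ≥ 4. Define End(P, G) to be the set of L-colorings φ of {p₀, p₁} such that every extension of φ to an L-coloring of V(P) extends to an L-coloring of G. Then End(P, G) ≠ ∅, and moreover either |End(P, G)| ≥ 2 or the path G − q has an even number of edges. -/

import Mathlib

/-- Vertex type of a broken wheel whose hub-deleted path `p₀ u₁ … u_t p₁` has `t + 2`
vertices: `some i` is the `i`-th path vertex (so `some 0 = p₀` and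
`some (Fin.last (t+1)) = p₁`), and `none` is the hub `q`. -/
abbrev BWVert (t : ℕ) := Option (Fin (t + 2))

/-- Adjacency in the broken wheel: the hub `q` is adjacent to every path vertex, and
two path vertices are adjacent exactly when they are consecutive. -/
def bwAdj (t : ℕ) : BWVert t → BWVert t → Prop
  | none, none => False
  | none, some _ => True
  | some _, none => True
  | some i, some j => i.val + 1 = j.val ∨ j.val + 1 = i.val

/-- An `L`-coloring of (all of) the broken wheel. -/
def IsBWColoring (t : ℕ) (L : BWVert t → Finset ℕ) (c : BWVert t → ℕ) : Prop :=
  (∀ v, c v ∈ L v) ∧ ∀ v w, bwAdj t v w → c v ≠ c w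

/-- `(a, b, cc)` is an `L`-coloring of the principal path `P = p₀ q p₁` (colors listed
in the order `p₀, q, p₁`); note that `p₀` and `p₁` are themselves adjacent exactly when
`t = 0`. -/
def IsPColoring (t : ℕ) (L : BWVert t → Finset ℕ) (a b cc : ℕ) : Prop :=
  a ∈ L (some 0) ∧ b ∈ L none ∧ cc ∈ L (some (Fin.last (t + 1))) ∧
  a ≠ b ∧ b ≠ cc ∧ (bwAdj t (some 0) (some (Fin.last (t + 1))) → a ≠ cc)

/-- The coloring `a, b, cc` of `p₀, q, p₁` extends to an `L`-coloring of the whole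
broken wheel. -/
def ExtendsToBW (t : ℕ) (L : BWVert t → Finset ℕ) (a b cc : ℕ) : Prop :=
  ∃ c : BWVert t → ℕ, IsBWColoring t L c ∧
    c (some 0) = a ∧ c none = b ∧ c (some (Fin.last (t + 1))) = cc

/-- `End(P, G)`: the set of `L`-colorings of `{p₀, p₁}` (recorded as pairs
`(φ(p₀), φ(p₁))`) every extension of which to an `L`-coloring of `V(P)` extends to an
`L`-coloring of `G`. -/
def EndPG (t : ℕ) (L : BWVert t → Finset ℕ) : Set (ℕ × ℕ) :=
  {p | p.1 ∈ L (some 0) ∧ p.2 ∈ L (some (Fin.last (t + 1))) ∧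
    (bwAdj t (some 0) (some (Fin.last (t + 1))) → p.1 ≠ p.2) ∧
    ∀ b : ℕ, IsPColoring t L p.1 b p.2 → ExtendsToBW t L p.1 b p.2}

/-! Fix the hub colour `b`. Colouring `p₀ u₁ … u_t` greedily from `p₀` with colours other
than `b`, every `uⱼ` has at least two admissible colours, so the colouring `a, b, cc` of
`p₀ q p₁` fails to extend only if every `uⱼ` is forced: `L(uⱼ) = {b, φ(uⱼ₋₁), φ(uⱼ)}`, with
`φ(u_t) = cc`. Two such obstructions `(a, cc)` and `(a, cc')` with `cc ≠ cc'` need different hub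
colours `b ≠ b'`; the two forced chains then alternate between agreeing and taking the colours
`b'`, `b`, which ends in different colours only for `t` odd, and then `L(u₁) = {a, cc, cc'}`.
So for even `t` the obstructed pairs form a partial matching between `L(p₀)` and `L(p₁)`,
leaving at least two good pairs. For odd `t` each colour is obstructed with at most two others,
and a `2 × 2` block of obstructed pairs would put both colours of `p₀` into `L(u₁)` beside the
two colours of `p₁`. -/

open Finset

section PathColoring

variable {α : Type*}

def IsPathColoring (M : ℕ → Finset α) (a : α) (n : ℕ) (g : ℕ → α) : Prop :=
  g 0 = a ∧ ∀ j < n, g (j + 1) ∈ M (j + 1) ∧ g (j + 1) ≠ g j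

variable {M : ℕ → Finset α} {a : α} {n : ℕ}

theorem IsPathColoring.update {g : ℕ → α} (hg : IsPathColoring M a n g) {x : α}
    (hx : x ∈ M (n + 1)) (hxg : x ≠ g n) :
    IsPathColoring M a (n + 1) (Function.update g (n + 1) x) := by
  refine ⟨by simpa using hg.1, fun j hj => ?_⟩
  rcases Nat.lt_succ_iff_lt_or_eq.1 hj with hj | rfl
  · simpa [Function.update_of_ne (by omega : j + 1 ≠ n + 1),
      Function.update_of_ne (by omega : j ≠ n + 1)] using hg.2 j hj
  · simpa using ⟨hx, hxg⟩

theorem three_le_card_reverse {N : ℕ → Finset α} (hN : ∀ j < n, 3 ≤ #(N (j + 1))) :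
    ∀ j < n, 3 ≤ #(N (n + 1 - (j + 1))) := fun j hj => by
  rw [show n + 1 - (j + 1) = n - j - 1 + 1 by omega]
  exact hN (n - j - 1) (by omega)

variable [DecidableEq α]

def IsForcedChain (M : ℕ → Finset α) (a : α) (n : ℕ) (c : ℕ → α) : Prop :=
  c 0 = a ∧ ∀ j < n, c (j + 1) ≠ c j ∧ M (j + 1) = {c j, c (j + 1)}

theorem ne_of_three_le_card {x y z : α} (h : 3 ≤ #({x, y, z} : Finset α)) :
    x ≠ y ∧ x ≠ z ∧ y ≠ z := by
  refine ⟨?_, ?_, ?_⟩ <;> rintro rfl <;> simp at h <;>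
    exact absurd (h.trans card_le_two) (by norm_num)

theorem mem_of_erase_eq_pair {s : Finset α} {b y z : α} (hs : 3 ≤ #s) (h : s.erase b = {y, z}) :
    b ∈ s := by
  by_contra hb
  rw [erase_eq_of_notMem hb] at h
  exact absurd (hs.trans (h ▸ card_le_two)) (by norm_num)

theorem eq_of_mem_of_erase_eq_pair {s : Finset α} {b x y z : α} (hx : x ∈ s) (hxb : x ≠ b)
    (h : s.erase b = {y, z}) (hxy : x ≠ y) : x = z := by
  have : x ∈ ({y, z} : Finset α) := h ▸ mem_erase.2 ⟨hxb, hx⟩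
  simpa [hxy] using this

theorem IsForcedChain.isPathColoring {c : ℕ → α} (h : IsForcedChain M a n c) :
    IsPathColoring M a n c :=
  ⟨h.1, fun j hj => ⟨by simp [(h.2 j hj).2], (h.2 j hj).1⟩⟩

theorem IsForcedChain.update {c : ℕ → α} (hc : IsForcedChain M a n c) {x : α}
    (hxc : x ≠ c n) (hM : M (n + 1) = {c n, x}) :
    IsForcedChain M a (n + 1) (Function.update c (n + 1) x) := by
  refine ⟨by simpa using hc.1, fun j hj => ?_⟩
  rcases Nat.lt_succ_iff_lt_or_eq.1 hj with hj | rfl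
  · simpa [Function.update_of_ne (by omega : j + 1 ≠ n + 1),
      Function.update_of_ne (by omega : j ≠ n + 1)] using hc.2 j hj
  · simpa using ⟨hxc, hM⟩

theorem IsForcedChain.unique {c c' : ℕ → α} (h : IsForcedChain M a n c)
    (h' : IsForcedChain M a n c') : ∀ j ≤ n, c j = c' j
  | 0, _ => h.1.trans h'.1.symm
  | j + 1, hj => by
    obtain ⟨hne, hM⟩ := h.2 j hj
    have hmem : c (j + 1) ∈ M (j + 1) := by simp [hM]
    rw [(h'.2 j hj).2, ← IsForcedChain.unique h h' j (by omega)] at hmem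
    simpa [hne] using hmem

theorem IsForcedChain.reverse {c : ℕ → α} (h : IsForcedChain M a n c) :
    IsForcedChain (fun j => M (n + 1 - j)) (c n) n (fun j => c (n - j)) := by
  refine ⟨rfl, fun j hj => ?_⟩
  obtain ⟨hne, hM⟩ := h.2 (n - (j + 1)) (by omega)
  rw [show n - (j + 1) + 1 = n - j by omega] at hne hM
  exact ⟨hne.symm, by simp only [show n + 1 - (j + 1) = n - j by omega, hM, pair_comm]⟩

theorem exists_isPathColoring_ne_or_isForcedChain (hM : ∀ j < n, 2 ≤ #(M (j + 1))) (a cc : α) :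
    (∃ g, IsPathColoring M a n g ∧ g n ≠ cc) ∨ ∃ c, IsForcedChain M a n c ∧ c n = cc := by
  induction n generalizing cc with
  | zero =>
    by_cases h : a = cc
    · exact .inr ⟨fun _ => a, ⟨rfl, by simp⟩, h⟩
    · exact .inl ⟨fun _ => a, ⟨rfl, by simp⟩, h⟩
  | succ n ih =>
    obtain ⟨x, hx, hxcc⟩ := exists_mem_ne (hM n n.lt_succ_self) cc
    rcases ih (fun j hj => hM j (by omega)) x with ⟨g, hg, hgx⟩ | ⟨c, hc, rfl⟩
    · exact .inl ⟨_, hg.update hx hgx.symm, by simpa using hxcc⟩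
    by_cases hy : ∃ y ∈ M (n + 1), y ≠ cc ∧ y ≠ c n
    · obtain ⟨y, hy, hycc, hyx⟩ := hy
      exact .inl ⟨_, hc.isPathColoring.update hy hyx, by simpa using hycc⟩
    push Not at hy
    have hMeq : M (n + 1) = {c n, cc} :=
      eq_of_subset_of_card_le (fun y hy' => by by_cases y = cc <;> simp_all)
        (card_le_two.trans (hM n n.lt_succ_self))
    exact .inr ⟨_, hc.update hxcc.symm hMeq, by simp⟩

/-- A precolouring `a, b, cc` of `p₀, q, p₁` that does not extend: with the hub colour `b`
removed, the lists `N` of `1, …, n` force the colouring of the path to end in `cc`, the colour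
of the next vertex `p₁`. -/
def IsObstructed (N : ℕ → Finset α) (n : ℕ) (a cc : α) : Prop :=
  ∃ b ≠ a, ∃ c, IsForcedChain (fun j => (N j).erase b) a n c ∧ c n = cc

variable {N : ℕ → Finset α} {cc : α}

theorem isObstructed_zero_self [Nontrivial α] : IsObstructed N 0 a a := by
  obtain ⟨b, hb⟩ := exists_ne a
  exact ⟨b, hb, fun _ => a, ⟨rfl, by simp⟩, rfl⟩

theorem IsForcedChain.ne_of_erase {b : α} {c : ℕ → α}
    (h : IsForcedChain (fun j => (N j).erase b) a n c) (hab : a ≠ b) : ∀ j ≤ n, c j ≠ b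
  | 0, _ => h.1 ▸ hab
  | j + 1, hj => by
    have hmem : c (j + 1) ∈ (N (j + 1)).erase b := by simp [(h.2 j hj).2]
    exact (mem_erase.1 hmem).1

/-- Each list `N (j + 1)` is `{b, c j, c (j + 1)} = {b', c' j, c' (j + 1)}`, which makes the
two chains alternate. -/
theorem IsForcedChain.alternate {b b' : α} {c c' : ℕ → α}
    (hN : ∀ j < n, 3 ≤ #(N (j + 1))) (hbb' : b ≠ b') (hab : a ≠ b) (hab' : a ≠ b')
    (h : IsForcedChain (fun j => (N j).erase b) a n c)
    (h' : IsForcedChain (fun j => (N j).erase b') a n c') :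
    ∀ j ≤ n, (Even j → c j = c' j) ∧ (Odd j → c j = b' ∧ c' j = b)
  | 0, _ => ⟨fun _ => h.1.trans h'.1.symm, by simp⟩
  | j + 1, hj => by
    have ih := IsForcedChain.alternate hN hbb' hab hab' h h' j (by omega)
    obtain ⟨hne, hM⟩ := h.2 j hj
    obtain ⟨hne', hM'⟩ := h'.2 j hj
    have hb := mem_of_erase_eq_pair (hN j hj) hM
    have hb' := mem_of_erase_eq_pair (hN j hj) hM'
    rcases Nat.even_or_odd j with he | ho
    · have hcc' := ih.1 he
      refine ⟨fun he' => absurd he (Nat.even_add_one.1 he'), fun _ => ⟨?_, ?_⟩⟩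
      · exact (eq_of_mem_of_erase_eq_pair hb' hbb'.symm hM
          (hcc' ▸ (h'.ne_of_erase hab' j (by omega)).symm)).symm
      · exact (eq_of_mem_of_erase_eq_pair hb hbb' hM'
          (hcc' ▸ (h.ne_of_erase hab j (by omega)).symm)).symm
    · obtain ⟨hcb', hc'b⟩ := ih.2 ho
      refine ⟨fun _ => ?_, fun ho' => absurd ho (Nat.odd_add_one.1 ho')⟩
      have hmem : c (j + 1) ∈ (N (j + 1)).erase b := by simp [hM]
      exact eq_of_mem_of_erase_eq_pair (mem_erase.1 hmem).2 (hcb' ▸ hne) hM'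
        (hc'b ▸ (mem_erase.1 hmem).1)

theorem IsObstructed.odd_and_eq (hN : ∀ j < n, 3 ≤ #(N (j + 1))) {cc' : α}
    (h : IsObstructed N n a cc) (h' : IsObstructed N n a cc') (hne : cc ≠ cc') :
    Odd n ∧ N 1 = {a, cc, cc'} := by
  obtain ⟨b, hba, c, hc, rfl⟩ := h
  obtain ⟨b', hb'a, c', hc', rfl⟩ := h'
  have hbb' : b ≠ b' := by
    rintro rfl
    exact hne (hc.unique hc' n le_rfl)
  have halt := IsForcedChain.alternate hN hbb' hba.symm hb'a.symm hc hc'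
  have hodd : Odd n := by
    rcases Nat.even_or_odd n with he | ho
    · exact absurd ((halt n le_rfl).1 he) hne
    · exact ho
  obtain ⟨hcn, hc'n⟩ := (halt n le_rfl).2 hodd
  obtain ⟨-, hM⟩ := hc.2 0 hodd.pos
  obtain ⟨hc1, -⟩ := (halt 1 hodd.pos).2 odd_one
  refine ⟨hodd, ?_⟩
  rw [← insert_erase (mem_of_erase_eq_pair (hN 0 hodd.pos) hM)]
  simp only [zero_add] at hM hc1
  rw [hM, hc.1, hc1, hcn, hc'n]
  ext
  simp only [mem_insert, mem_singleton]
  tauto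

theorem IsObstructed.reverse (h : IsObstructed N n a cc) :
    IsObstructed (fun j => N (n + 1 - j)) n cc a := by
  obtain ⟨b, hba, c, hc, rfl⟩ := h
  exact ⟨b, (hc.ne_of_erase hba.symm n le_rfl).symm, _, hc.reverse, by simpa using hc.1⟩

theorem IsObstructed.eq_or_eq_or_eq (hN : ∀ j < n, 3 ≤ #(N (j + 1))) {c₁ c₂ c₃ : α}
    (h₁ : IsObstructed N n a c₁) (h₂ : IsObstructed N n a c₂) (h₃ : IsObstructed N n a c₃) :
    c₁ = c₂ ∨ c₁ = c₃ ∨ c₂ = c₃ := by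
  by_contra! hne
  obtain ⟨hodd, h₁₂⟩ := h₁.odd_and_eq hN h₂ hne.1
  obtain ⟨-, h₁₃⟩ := h₁.odd_and_eq hN h₃ hne.2.1
  have hcard : 3 ≤ #({a, c₁, c₃} : Finset α) := h₁₃ ▸ hN 0 hodd.pos
  have hmem : c₃ ∈ ({a, c₁, c₂} : Finset α) := h₁₂ ▸ h₁₃ ▸ by simp
  simp only [mem_insert, mem_singleton] at hmem
  rcases hmem with h | h | h
  · exact (ne_of_three_le_card hcard).2.1 h.symm
  · exact hne.2.1 h.symm
  · exact hne.2.2 h.symm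

/-- Both `a` and `a'` would be the third colour of `N 1` besides `d` and `d'`. -/
theorem IsObstructed.not_square (hN : ∀ j < n, 3 ≤ #(N (j + 1))) {a' d d' : α}
    (ha : a ≠ a') (hd : d ≠ d') (h₁ : IsObstructed N n a d) (h₂ : IsObstructed N n a d')
    (h₃ : IsObstructed N n a' d) (h₄ : IsObstructed N n a' d') : False := by
  obtain ⟨hodd, h₁₂⟩ := h₁.odd_and_eq hN h₂ hd
  obtain ⟨-, h₃₄⟩ := h₃.odd_and_eq hN h₄ hd
  have hcard : 3 ≤ #({a, d, d'} : Finset α) := h₁₂ ▸ hN 0 hodd.pos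
  have hmem : a ∈ ({a', d, d'} : Finset α) := h₃₄ ▸ h₁₂ ▸ by simp
  obtain ⟨had, had', -⟩ := ne_of_three_le_card hcard
  simp [ha, had, had'] at hmem

theorem exists_not_isObstructed {A C : Finset α} (hN : ∀ j < n, 3 ≤ #(N (j + 1)))
    (hA : A.Nonempty) (hC : C.Nonempty) (hsum : 4 ≤ #A + #C) :
    ∃ a ∈ A, ∃ cc ∈ C, ¬ IsObstructed N n a cc := by
  by_contra! hall
  obtain ⟨a, ha⟩ := hA
  obtain ⟨d, hd⟩ := hC
  rcases le_or_gt 3 #C with hC3 | hC3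
  · obtain ⟨d₁, h₁, d₂, h₂, d₃, h₃, h₁₂, h₁₃, h₂₃⟩ := two_lt_card.1 hC3
    rcases (hall a ha d₁ h₁).eq_or_eq_or_eq hN (hall a ha d₂ h₂) (hall a ha d₃ h₃)
      with h | h | h <;> contradiction
  rcases le_or_gt 3 #A with hA3 | hA3
  · obtain ⟨a₁, h₁, a₂, h₂, a₃, h₃, h₁₂, h₁₃, h₂₃⟩ := two_lt_card.1 hA3
    rcases (hall a₁ h₁ d hd).reverse.eq_or_eq_or_eq (three_le_card_reverse hN)
      (hall a₂ h₂ d hd).reverse (hall a₃ h₃ d hd).reverse with h | h | h <;> contradiction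
  obtain ⟨a₁, h₁, a₂, h₂, haa⟩ := one_lt_card.1 (by omega : 1 < #A)
  obtain ⟨d₁, h₁', d₂, h₂', hdd⟩ := one_lt_card.1 (by omega : 1 < #C)
  exact IsObstructed.not_square hN haa hdd (hall a₁ h₁ d₁ h₁') (hall a₁ h₁ d₂ h₂')
    (hall a₂ h₂ d₁ h₁') (hall a₂ h₂ d₂ h₂')

theorem IsObstructed.right_unique_of_even (hN : ∀ j < n, 3 ≤ #(N (j + 1))) (hn : Even n)
    {cc' : α} (h : IsObstructed N n a cc) (h' : IsObstructed N n a cc') : cc = cc' := by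
  by_contra hne
  exact Nat.not_odd_iff_even.2 hn (h.odd_and_eq hN h' hne).1

theorem IsObstructed.left_unique_of_even (hN : ∀ j < n, 3 ≤ #(N (j + 1))) (hn : Even n)
    {a' : α} (h : IsObstructed N n a cc) (h' : IsObstructed N n a' cc) : a = a' :=
  h.reverse.right_unique_of_even (three_le_card_reverse hN) hn h'.reverse

end PathColoring

theorem two_le_card_filter_not_of_unique {α β : Type*} {A : Finset α} {C : Finset β}
    (R : α → β → Prop) [DecidableRel R] (hA : A.Nonempty) (hC : C.Nonempty)
    (hsum : 4 ≤ #A + #C) (hR₁ : ∀ a c c', R a c → R a c' → c = c')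
    (hR₂ : ∀ a a' c, R a c → R a' c → a = a') :
    2 ≤ #{p ∈ A ×ˢ C | ¬ R p.1 p.2} := by
  set S := {p ∈ A ×ˢ C | R p.1 p.2}
  have hSA : #S ≤ #A := card_le_card_of_injOn Prod.fst
    (fun p hp => (mem_product.1 (mem_filter.1 hp).1).1)
    (fun p hp q hq hpq =>
      Prod.ext hpq (hR₁ _ _ _ (mem_filter.1 hp).2 (hpq ▸ (mem_filter.1 hq).2)))
  have hSC : #S ≤ #C := card_le_card_of_injOn Prod.snd
    (fun p hp => (mem_product.1 (mem_filter.1 hp).1).2)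
    (fun p hp q hq hpq =>
      Prod.ext (hR₂ _ _ _ (mem_filter.1 hp).2 (hpq ▸ (mem_filter.1 hq).2)) hpq)
  have htot := card_filter_add_card_filter_not (s := A ×ˢ C) (fun p => R p.1 p.2)
  rw [card_product] at htot
  have := hA.card_pos
  have := hC.card_pos
  -- `#A * #C - min #A #C ≥ 2` as soon as `#A + #C ≥ 4`
  nlinarith

namespace BrokenWheel

open Fin.NatCast

variable {t : ℕ} {L : BWVert t → Finset ℕ}

def pathList (L : BWVert t → Finset ℕ) (j : ℕ) : Finset ℕ := L (some (j : Fin (t + 2)))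

theorem pathList_val (i : Fin (t + 2)) : pathList L i = L (some i) := by
  simp [pathList]

theorem pathList_last : pathList L (t + 1) = L (some (Fin.last (t + 1))) := by
  rw [pathList, Fin.natCast_eq_last]

theorem three_le_card_pathList
    (hL : ∀ v : BWVert t, v ≠ some 0 → v ≠ none → v ≠ some (Fin.last (t + 1)) → 3 ≤ (L v).card) :
    ∀ j < t, 3 ≤ #(pathList L (j + 1)) := by
  intro j hj
  have hval : ((j + 1 : ℕ) : Fin (t + 2)).val = j + 1 := by
    rw [Fin.val_natCast, Nat.mod_eq_of_lt (by omega)]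
  refine hL _ (fun h => ?_) (by simp) (fun h => ?_)
  · have := congrArg Fin.val (Option.some_injective _ h)
    simp only [hval, Fin.val_zero] at this
    omega
  · have := congrArg Fin.val (Option.some_injective _ h)
    simp only [hval, Fin.val_last] at this
    omega

theorem eq_zero_of_bwAdj (h : bwAdj t (some 0) (some (Fin.last (t + 1)))) : t = 0 := by
  simp [bwAdj] at h
  omega

theorem extendsToBW_of_isPathColoring {a b cc : ℕ} {g : ℕ → ℕ} (ha : a ∈ L (some 0))
    (hb : b ∈ L none) (hab : a ≠ b)
    (hg : IsPathColoring (fun j => (pathList L j).erase b) a (t + 1) g) (hcc : g (t + 1) = cc) :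
    ExtendsToBW t L a b cc := by
  have hvert : ∀ i : Fin (t + 2), g i ∈ L (some i) ∧ g i ≠ b := by
    intro i
    induction i using Fin.cases with
    | zero => simpa [hg.1] using ⟨ha, hab⟩
    | succ i =>
      have := (hg.2 i i.isLt).1
      rw [← pathList_val (L := L)]
      simpa [and_comm] using this
  refine ⟨fun v => v.elim b (fun i => g i), ⟨fun v => ?_, fun v w hvw => ?_⟩, hg.1, rfl,
    by simpa using hcc⟩
  · cases v with
    | none => exact hb
    | some i => exact (hvert i).1
  · match v, w, hvw with
    | none, some i, _ => exact (hvert i).2.symm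
    | some i, none, _ => exact (hvert i).2
    | some i, some j, Or.inl h =>
      show g i ≠ g j
      rw [← h]
      exact (hg.2 i (by omega)).2.symm
    | some i, some j, Or.inr h =>
      show g i ≠ g j
      rw [← h]
      exact (hg.2 j (by omega)).2

theorem mem_endPG_of_not_isObstructed (hN : ∀ j < t, 3 ≤ #(pathList L (j + 1))) {a cc : ℕ}
    (ha : a ∈ L (some 0)) (hcc : cc ∈ L (some (Fin.last (t + 1))))
    (h : ¬ IsObstructed (pathList L) t a cc) : (a, cc) ∈ EndPG t L := by
  refine ⟨ha, hcc, fun hadj hacc => h ?_, fun b ⟨_, hb, _, hab, hbcc, _⟩ => ?_⟩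
  · obtain rfl := eq_zero_of_bwAdj hadj
    obtain rfl : a = cc := hacc
    exact isObstructed_zero_self
  have hM : ∀ j < t, 2 ≤ #((pathList L (j + 1)).erase b) := fun j hj => by
    have := pred_card_le_card_erase (s := pathList L (j + 1)) (a := b)
    have := hN j hj
    omega
  rcases exists_isPathColoring_ne_or_isForcedChain (M := fun j => (pathList L j).erase b) hM a cc
    with ⟨g, hg, hgcc⟩ | ⟨c, hc, hccc⟩
  · refine extendsToBW_of_isPathColoring ha hb hab (hg.update ?_ hgcc.symm) (by simp)
    simpa [pathList_last] using ⟨hbcc.symm, hcc⟩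
  · exact absurd ⟨b, hab.symm, c, hc, hccc⟩ h

theorem finite_endPG (t : ℕ) (L : BWVert t → Finset ℕ) : (EndPG t L).Finite :=
  (L (some 0) ×ˢ L (some (Fin.last (t + 1)))).finite_toSet.subset
    fun _ hp => mem_product.2 ⟨hp.1, hp.2.1⟩

end BrokenWheel

open BrokenWheel

/-- Theorem 3.3 specialized to broken wheels: if `|L(p₀)| + |L(p₁)| ≥ 4`, then
`End(P, G) ≠ ∅`, and moreover either `|End(P, G)| ≥ 2` or the path `G - q` has an
even number of edges. -/
theorem bwheel_end_nonempty (t : ℕ) (L : BWVert t → Finset ℕ)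
    (hL : ∀ v : BWVert t, v ≠ some 0 → v ≠ none → v ≠ some (Fin.last (t + 1)) →
      3 ≤ (L v).card)
    (h0 : (L (some 0)).Nonempty) (h1 : (L (some (Fin.last (t + 1)))).Nonempty)
    (hsum : 4 ≤ (L (some 0)).card + (L (some (Fin.last (t + 1)))).card) :
    (EndPG t L).Nonempty ∧ (2 ≤ (EndPG t L).ncard ∨ Even (t + 1)) := by
  classical
  have hN := three_le_card_pathList hL
  rcases Nat.even_or_odd t with ht | ht
  · have h2 := two_le_card_filter_not_of_unique (IsObstructed (pathList L) t) h0 h1 hsum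
      (fun _ _ _ => IsObstructed.right_unique_of_even hN ht)
      (fun _ _ _ => IsObstructed.left_unique_of_even hN ht)
    have hsub : (↑{p ∈ L (some 0) ×ˢ L (some (Fin.last (t + 1))) |
        ¬ IsObstructed (pathList L) t p.1 p.2} : Set (ℕ × ℕ)) ⊆ EndPG t L := fun _ hp => by
      obtain ⟨hp, hobs⟩ := mem_filter.1 hp
      exact mem_endPG_of_not_isObstructed hN (mem_product.1 hp).1 (mem_product.1 hp).2 hobs
    have hcard : 2 ≤ (EndPG t L).ncard :=
      h2.trans (Set.ncard_coe_finset _ ▸ Set.ncard_le_ncard hsub (finite_endPG t L))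
    exact ⟨Set.nonempty_of_ncard_ne_zero (by omega), .inl hcard⟩
  · obtain ⟨a, ha, cc, hcc, h⟩ := exists_not_isObstructed hN h0 h1 hsum
    exact ⟨⟨_, mem_endPG_of_not_isObstructed hN ha hcc h⟩, .inr ht.add_one⟩
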